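/- Let Γ be a Fuchsian group with trivial stabilizer of i, and for a > 0 let Γᵃ be its set of elements of Frobenius norm at most a. If ‖A‖ > a for A ∈ Γ, then the half-plane H_i(A) = {z : d_ℍ(z,i) ≤ d_ℍ(z, A·i)} contains the open ball B(i, log ν(a)); consequently removing A from the intersection defining the Dirichlet domain does not change it inside B(i, log ν(a)). -/

import Mathlib

open UpperHalfPlane

/-- The Frobenius norm of a real 2×2 matrix: `‖A‖ = √(tr(AᵀA))`. -/
noncomputable def frobNorm (A : Matrix (Fin 2) (Fin 2) ℝ) : ℝ :=
  Real.sqrt (Matrix.trace (A.transpose * A))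

/-- The function `ν(a) = √((a² + √(a⁴ − 4))/2)`. -/
noncomputable def nu (a : ℝ) : ℝ := Real.sqrt ((a ^ 2 + Real.sqrt (a ^ 4 - 4)) / 2)

/-!
The hyperbolic displacement of `i` by `g ∈ SL₂(ℝ)` is governed by the Frobenius norm:
`cosh d(i, g·i) = ‖g‖² / 2`, while `ν(a)` is chosen so that `cosh (2 log ν(a)) = a² / 2`.
Hence `‖A‖ > a` forces `d(i, A·i) > 2 log ν(a)`, and any point within `log ν(a)` of `i` is,
by the triangle inequality, closer to `i` than to `A·i`.
-/

open Real
open scoped MatrixGroups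

theorem frobNorm_sq (A : Matrix (Fin 2) (Fin 2) ℝ) :
    frobNorm A ^ 2 = A 0 0 ^ 2 + A 0 1 ^ 2 + A 1 0 ^ 2 + A 1 1 ^ 2 := by
  have htrace : (A.transpose * A).trace = A 0 0 ^ 2 + A 0 1 ^ 2 + A 1 0 ^ 2 + A 1 1 ^ 2 := by
    simp only [Matrix.trace_fin_two, Matrix.mul_apply, Fin.sum_univ_two, Matrix.transpose_apply]
    ring
  rw [frobNorm, htrace, sq_sqrt (by positivity)]

theorem cosh_two_mul_log_nu {a : ℝ} (ha : 2 ≤ a ^ 2) : cosh (2 * log (nu a)) = a ^ 2 / 2 := by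
  set s := √(a ^ 4 - 4)
  have hs : s ^ 2 = a ^ 4 - 4 := sq_sqrt (by nlinarith)
  have hnu : nu a ^ 2 = (a ^ 2 + s) / 2 := sq_sqrt (by positivity)
  -- `ν(a)²` and `ν(a)⁻²` are the two roots of `x² - a²x + 1`.
  have hinv : (nu a ^ 2)⁻¹ = (a ^ 2 - s) / 2 := by
    rw [hnu]
    exact inv_eq_of_mul_eq_one_right (by linear_combination (-1 / 4 : ℝ) * hs)
  have hlog : 2 * log (nu a) = log (nu a ^ 2) := by
    rw [log_pow]
    norm_num
  rw [hlog, cosh_log (hnu ▸ by positivity), hinv, hnu]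
  ring

theorem Metric.ball_subset_setOf_dist_le_dist {α : Type*} [PseudoMetricSpace α] {x y : α}
    {r : ℝ} (h : 2 * r ≤ dist x y) : Metric.ball x r ⊆ {z | dist z x ≤ dist z y} := by
  intro z hz
  show dist z x ≤ dist z y
  linarith [Metric.mem_ball.mp hz, dist_triangle_left x y z]

namespace UpperHalfPlane

theorem cosh_dist_I (z : ℍ) : cosh (dist I z) = (Complex.normSq z + 1) / (2 * z.im) := by
  have him : z.im ≠ 0 := z.im_pos.ne'
  rw [cosh_dist, I_im, Complex.dist_eq, Complex.sq_norm, Complex.normSq_apply,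
    Complex.normSq_apply]
  simp only [coe_I, Complex.sub_re, Complex.sub_im, Complex.I_re, Complex.I_im, coe_re, coe_im]
  field_simp
  ring

theorem im_smul_I (g : SL(2, ℝ)) : (g • I).im = 1 / (g 1 0 ^ 2 + g 1 1 ^ 2) := by
  change (Matrix.SpecialLinearGroup.mapGL ℝ g • I).im = _
  rw [im_smul_eq_div_normSq, denom, Complex.normSq_apply]
  simp only [Matrix.SpecialLinearGroup.det_mapGL, Units.val_one, abs_one, I_im, mul_one,
    Matrix.SpecialLinearGroup.mapGL_coe_matrix, Matrix.SpecialLinearGroup.map_apply_coe,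
    Algebra.algebraMap_self, RingHom.mapMatrix_id, RingHom.id_apply, coe_I, Complex.add_re, Complex.mul_re,
    Complex.ofReal_re, Complex.I_re, mul_zero, Complex.ofReal_im, Complex.I_im, sub_self,
    zero_add, Complex.add_im, Complex.mul_im, add_zero]
  ring

theorem normSq_smul_I (g : SL(2, ℝ)) :
    Complex.normSq (g • I : ℍ) = (g 0 0 ^ 2 + g 0 1 ^ 2) / (g 1 0 ^ 2 + g 1 1 ^ 2) := by
  rw [coe_specialLinearGroup_apply, map_div₀, Complex.normSq_apply, Complex.normSq_apply]
  simp only [Algebra.algebraMap_self, RingHom.id_apply, coe_I, Complex.add_re, Complex.mul_re,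
    Complex.ofReal_re, Complex.I_re, mul_zero, Complex.ofReal_im, Complex.I_im, mul_one,
    sub_self, zero_add, Complex.add_im, Complex.mul_im, add_zero]
  ring

theorem cosh_dist_I_smul_I (g : SL(2, ℝ)) : cosh (dist I (g • I)) = frobNorm g ^ 2 / 2 := by
  have hden : g 1 0 ^ 2 + g 1 1 ^ 2 ≠ 0 := by
    have := (g • I).im_pos
    rw [im_smul_I] at this
    exact (one_div_pos.mp this).ne'
  rw [cosh_dist_I, normSq_smul_I, im_smul_I, frobNorm_sq]
  field_simp
  ring

end UpperHalfPlane

theorem ball_subset_halfPlane_of_norm_gt_general (A : Matrix.SpecialLinearGroup (Fin 2) ℝ)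
    (a : ℝ) (ha : Real.sqrt 2 ≤ a)
    (hnorm : a < frobNorm A.1) :
    Metric.ball UpperHalfPlane.I (Real.log (nu a)) ⊆
      {z : ℍ | dist z UpperHalfPlane.I ≤ dist z (A • UpperHalfPlane.I)} := by
  have ha0 : 0 ≤ a := (sqrt_nonneg 2).trans ha
  have ha2 : 2 ≤ a ^ 2 := by
    simpa using pow_le_pow_left₀ (sqrt_nonneg 2) ha 2
  have hcosh : cosh (2 * log (nu a)) < cosh (dist I (A • I)) := by
    rw [cosh_two_mul_log_nu ha2, cosh_dist_I_smul_I]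
    gcongr
  apply Metric.ball_subset_setOf_dist_le_dist
  calc 2 * log (nu a) ≤ |2 * log (nu a)| := le_abs_self _
    _ ≤ |dist I (A • I)| := (cosh_lt_cosh.mp hcosh).le
    _ = dist I (A • I) := abs_of_nonneg dist_nonneg

/-- For `A ∈ SL₂(ℝ)` with `A·i ≠ i` and Frobenius norm `‖A‖ > a ≥ √2`, the open
hyperbolic ball `B(i, log ν(a))` is contained in the half-plane
`H_i(A) = {z : d(z,i) ≤ d(z, A·i)}`. -/
theorem ball_subset_halfPlane_of_norm_gt (A : Matrix.SpecialLinearGroup (Fin 2) ℝ)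
    (hA : A • UpperHalfPlane.I ≠ UpperHalfPlane.I) (a : ℝ) (ha : Real.sqrt 2 ≤ a)
    (hnorm : a < frobNorm A.1) :
    Metric.ball UpperHalfPlane.I (Real.log (nu a)) ⊆
      {z : ℍ | dist z UpperHalfPlane.I ≤ dist z (A • UpperHalfPlane.I)} :=
  ball_subset_halfPlane_of_norm_gt_general A a ha hnorm
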